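/- Let X be an M×N real matrix, λ > 0, and H a positive integer. Then min over U: M×H and V: N×H of ‖X − U Vᵀ‖_F² + λ(‖U‖_F² + ‖V‖_F²) equals min over M×N matrices S with rank(S) ≤ H of ‖X − S‖_F² + 2λ‖S‖_*, and both minima are attained. Moreover, if (Û, V̂) attains the left-hand minimum, then Ŝ = Û V̂ᵀ attains the right-hand minimum. -/

import Mathlib

open Matrix BigOperators

/-- The singular values of a real `M × N` matrix, sorted in decreasing order and
indexed by `Fin N` (the square roots of the eigenvalues of `XᵀX`). -/
noncomputable def svalAux {M N : ℕ} (X : Matrix (Fin M) (Fin N) ℝ) : Fin N → ℝ :=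
  fun r => Real.sqrt
    (((Matrix.isHermitian_conjTranspose_mul_self X).eigenvalues ∘
      Tuple.sort ((Matrix.isHermitian_conjTranspose_mul_self X).eigenvalues)) r.rev)

/-- The `r`-th singular value (0-indexed, decreasing) of a real matrix, `0` if `r ≥ N`. -/
noncomputable def sval {M N : ℕ} (X : Matrix (Fin M) (Fin N) ℝ) (r : ℕ) : ℝ :=
  if h : r < N then svalAux X ⟨r, h⟩ else 0

/-- Squared Frobenius norm. -/
noncomputable def frobSq {M N : ℕ} (X : Matrix (Fin M) (Fin N) ℝ) : ℝ :=
  ∑ i, ∑ j, (X i j) ^ 2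

/-- Nuclear norm: sum of the singular values. -/
noncomputable def nucNorm {M N : ℕ} (X : Matrix (Fin M) (Fin N) ℝ) : ℝ :=
  ∑ r ∈ Finset.range (min M N), sval X r

/-
The penalty `‖U‖_F² + ‖V‖_F²` dominates `2 ‖U Vᵀ‖_*`: if `q_r` are orthonormal eigenvectors of
`SᵀS` for `S = U Vᵀ` and `p_r = S q_r / σ_r` the corresponding left singular vectors, then
`σ_r = ⟪Uᵀ p_r, Vᵀ q_r⟫ ≤ (‖Uᵀ p_r‖² + ‖Vᵀ q_r‖²) / 2`, and Bessel's inequality applied to the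
columns of `U` and `V` bounds the sums of the right-hand sides by `‖U‖_F²` and `‖V‖_F²`.
Conversely a matrix `S` of rank at most `H` has the balanced factorization with columns
`σ_r^{-1/2} S q_r` and `σ_r^{1/2} q_r`, `r < H`, for which both squared norms equal `‖S‖_*`.
So the two objectives have the same infimum over `rank S ≤ H`, and the factorized one, being
continuous and coercive, attains it.
-/

open Finset Filter

lemma OrthonormalBasis.sum_apply_mul_apply {n : Type*} [Fintype n] [DecidableEq n]
    (b : OrthonormalBasis n ℝ (EuclideanSpace ℝ n)) (l k : n) :
    ∑ j, b j l * b j k = if l = k then 1 else 0 := by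
  simpa [EuclideanSpace.inner_single_left, EuclideanSpace.inner_single_right, Pi.single_apply,
    eq_comm] using b.sum_inner_mul_inner (EuclideanSpace.single l 1) (EuclideanSpace.single k 1)

lemma sum_sq_dotProduct_le {ι n : Type*} [DecidableEq ι] [Fintype n] (s : Finset ι)
    (p : ι → n → ℝ) (hp : ∀ i ∈ s, ∀ j ∈ s, p i ⬝ᵥ p j = if i = j then 1 else 0) (u : n → ℝ) :
    ∑ i ∈ s, (p i ⬝ᵥ u) ^ 2 ≤ u ⬝ᵥ u := by
  have hinner (v w : n → ℝ) :
      inner ℝ (WithLp.toLp 2 v : EuclideanSpace ℝ n) (WithLp.toLp 2 w) = v ⬝ᵥ w := by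
    rw [EuclideanSpace.inner_eq_star_dotProduct, dotProduct_comm]; simp
  have hon : Orthonormal ℝ fun i : s => (WithLp.toLp 2 (p i) : EuclideanSpace ℝ n) := by
    rw [orthonormal_iff_ite]
    intro i j
    rw [hinner, hp i i.2 j j.2]
    exact if_congr Subtype.ext_iff.symm rfl rfl
  have := hon.sum_inner_products_le (WithLp.toLp 2 u) (s := univ)
  rw [← real_inner_self_eq_norm_sq, hinner] at this
  simpa [hinner, sum_attach s fun i => (p i ⬝ᵥ u) ^ 2] using this

lemma two_mul_dotProduct_le {n : Type*} [Fintype n] (a b : n → ℝ) :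
    2 * (a ⬝ᵥ b) ≤ a ⬝ᵥ a + b ⬝ᵥ b := by
  simp only [dotProduct, mul_sum, ← sum_add_distrib]
  exact sum_le_sum fun i _ => by nlinarith [sq_nonneg (a i - b i)]

section SingularVectors

variable {M N : ℕ} (X : Matrix (Fin M) (Fin N) ℝ)

noncomputable def svalIndex : Fin N ≃ Fin N :=
  Fin.revPerm.trans (Tuple.sort (isHermitian_conjTranspose_mul_self X).eigenvalues)

noncomputable def rightSingularVector (r : ℕ) : Fin N → ℝ :=
  if h : r < N then
    ⇑((isHermitian_conjTranspose_mul_self X).eigenvectorBasis (svalIndex X ⟨r, h⟩))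
  else 0

lemma sq_sval_of_lt {r : ℕ} (hr : r < N) :
    sval X r ^ 2 = (isHermitian_conjTranspose_mul_self X).eigenvalues (svalIndex X ⟨r, hr⟩) := by
  rw [sval, dif_pos hr, svalAux]
  exact Real.sq_sqrt (eigenvalues_conjTranspose_mul_self_nonneg X _)

lemma sval_nonneg (r : ℕ) : 0 ≤ sval X r := by
  unfold sval; split_ifs <;> simp [svalAux, Real.sqrt_nonneg]

lemma sval_eq_zero_of_rank_le {r : ℕ} (hr : X.rank ≤ r) : sval X r = 0 := by
  set hX := isHermitian_conjTranspose_mul_self X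
  by_contra hne
  have hrN : r < N := by by_contra h; exact hne (by simp [sval, h])
  have hpos : 0 < hX.eigenvalues (svalIndex X ⟨r, hrN⟩) := by
    rw [← sq_sval_of_lt X hrN]; positivity
  -- the `r + 1` largest eigenvalues of `Xᵀ * X` would be positive, but only `rank X` are nonzero
  have hsub : (Iic (⟨r, hrN⟩ : Fin N)).map (svalIndex X).toEmbedding ⊆
      univ.filter fun j => hX.eigenvalues j ≠ 0 := by
    intro j hj
    obtain ⟨s, hs, rfl⟩ := mem_map.1 hj
    refine mem_filter.2 ⟨mem_univ _, (hpos.trans_le ?_).ne'⟩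
    exact Tuple.monotone_sort hX.eigenvalues (Fin.rev_le_rev.2 (mem_Iic.1 hs))
  have hcard : r + 1 ≤ (Xᴴ * X).rank := by
    rw [hX.rank_eq_card_non_zero_eigs, Fintype.card_subtype]
    simpa using card_le_card hsub
  rw [conjTranspose_eq_transpose_of_trivial, rank_transpose_mul_self] at hcard
  omega

lemma sum_range_sval_eq_nucNorm {K : ℕ} (hK : X.rank ≤ K) :
    ∑ r ∈ range K, sval X r = nucNorm X := by
  have hvanish : ∀ r ≥ X.rank, sval X r = 0 := fun r hr => sval_eq_zero_of_rank_le X hr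
  rw [nucNorm, eventually_constant_sum hvanish hK,
    eventually_constant_sum hvanish (le_min X.rank_le_height X.rank_le_width)]

lemma rightSingularVector_of_lt {r : ℕ} (hr : r < N) : rightSingularVector X r =
    ⇑((isHermitian_conjTranspose_mul_self X).eigenvectorBasis (svalIndex X ⟨r, hr⟩)) :=
  dif_pos hr

lemma sum_range_rightSingularVector {R : Type*} [AddCommMonoid R] (f : (Fin N → ℝ) → R) :
    ∑ r ∈ range N, f (rightSingularVector X r) =
      ∑ j, f ⇑((isHermitian_conjTranspose_mul_self X).eigenvectorBasis j) := by
  rw [sum_range]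
  exact Fintype.sum_equiv (svalIndex X) _ _ fun r => by rw [rightSingularVector_of_lt X r.isLt]

lemma rightSingularVector_dotProduct {r s : ℕ} (hr : r < N) (hs : s < N) :
    rightSingularVector X r ⬝ᵥ rightSingularVector X s = if r = s then 1 else 0 := by
  have h := orthonormal_iff_ite.1
    (isHermitian_conjTranspose_mul_self X).eigenvectorBasis.orthonormal
    (svalIndex X ⟨r, hr⟩) (svalIndex X ⟨s, hs⟩)
  rw [EuclideanSpace.inner_eq_star_dotProduct, dotProduct_comm] at h
  simpa [rightSingularVector, hr, hs, Fin.ext_iff] using h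

lemma mulVec_rightSingularVector_dotProduct (r s : ℕ) :
    (X *ᵥ rightSingularVector X r) ⬝ᵥ (X *ᵥ rightSingularVector X s) =
      if r = s then sval X r ^ 2 else 0 := by
  by_cases hr : r < N
  · by_cases hs : s < N
    · have hXX : (X *ᵥ rightSingularVector X r) ⬝ᵥ (X *ᵥ rightSingularVector X s) =
          rightSingularVector X r ⬝ᵥ ((Xᴴ * X) *ᵥ rightSingularVector X s) := by
        rw [conjTranspose_eq_transpose_of_trivial, ← mulVec_mulVec,
          dotProduct_mulVec (rightSingularVector X r), vecMul_transpose]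
      rw [hXX, rightSingularVector_of_lt X hs, IsHermitian.mulVec_eigenvectorBasis,
        ← rightSingularVector_of_lt X hs, dotProduct_smul, rightSingularVector_dotProduct X hr hs,
        ← sq_sval_of_lt X hs]
      split_ifs with h <;> simp [h]
    · simp [rightSingularVector, hs, show r ≠ s by omega]
  · simp [rightSingularVector, hr, sval]

lemma sum_mulVec_rightSingularVector_mul (i : Fin M) (k : Fin N) :
    ∑ r ∈ range N, (X *ᵥ rightSingularVector X r) i * rightSingularVector X r k = X i k := by
  rw [sum_range_rightSingularVector X fun q => (X *ᵥ q) i * q k]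
  simp only [mulVec, dotProduct, sum_mul, mul_assoc]
  rw [sum_comm]
  simp_rw [← mul_sum, OrthonormalBasis.sum_apply_mul_apply]
  simp

lemma mulVec_rightSingularVector_eq_zero {r : ℕ} (hr : sval X r = 0) :
    X *ᵥ rightSingularVector X r = 0 := by
  rw [← dotProduct_self_eq_zero, mulVec_rightSingularVector_dotProduct, if_pos rfl, hr]
  simp

end SingularVectors

section Frobenius

variable {M K : ℕ}

lemma frobSq_eq_sum_col_dotProduct (U : Matrix (Fin M) (Fin K) ℝ) :
    frobSq U = ∑ h, U.col h ⬝ᵥ U.col h := by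
  rw [frobSq, sum_comm]
  simp [dotProduct, sq]

lemma sum_dotProduct_transpose_mulVec_le {ι : Type*} [DecidableEq ι] (s : Finset ι)
    (p : ι → Fin M → ℝ) (hp : ∀ i ∈ s, ∀ j ∈ s, p i ⬝ᵥ p j = if i = j then 1 else 0)
    (U : Matrix (Fin M) (Fin K) ℝ) :
    ∑ i ∈ s, (Uᵀ *ᵥ p i) ⬝ᵥ (Uᵀ *ᵥ p i) ≤ frobSq U := by
  have hcol (i : ι) : (Uᵀ *ᵥ p i) ⬝ᵥ (Uᵀ *ᵥ p i) = ∑ h, (p i ⬝ᵥ U.col h) ^ 2 := by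
    simp only [dotProduct, mulVec, col_apply, transpose_apply, sq]
    exact sum_congr rfl fun h _ => by simp only [mul_comm (p i _)]
  rw [frobSq_eq_sum_col_dotProduct, sum_congr rfl fun i _ => hcol i, sum_comm]
  exact sum_le_sum fun h _ => sum_sq_dotProduct_le s p hp _

end Frobenius

lemma two_mul_nucNorm_mul_transpose_le {M N K : ℕ} (U : Matrix (Fin M) (Fin K) ℝ)
    (V : Matrix (Fin N) (Fin K) ℝ) : 2 * nucNorm (U * Vᵀ) ≤ frobSq U + frobSq V := by
  set A := U * Vᵀ
  set s := (range N).filter fun r => sval A r ≠ 0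
  set p := fun r => (sval A r)⁻¹ • (A *ᵥ rightSingularVector A r)
  have hnuc : nucNorm A = ∑ r ∈ s, sval A r := by
    rw [sum_filter_ne_zero, sum_range_sval_eq_nucNorm A A.rank_le_width]
  have hq : ∀ r ∈ s, ∀ t ∈ s,
      rightSingularVector A r ⬝ᵥ rightSingularVector A t = if r = t then 1 else 0 :=
    fun r hr t ht => rightSingularVector_dotProduct A (mem_range.1 (mem_filter.1 hr).1)
      (mem_range.1 (mem_filter.1 ht).1)
  have hp : ∀ r ∈ s, ∀ t ∈ s, p r ⬝ᵥ p t = if r = t then 1 else 0 := by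
    intro r hr t _
    simp only [p, smul_dotProduct, dotProduct_smul, smul_eq_mul,
      mulVec_rightSingularVector_dotProduct]
    split_ifs with h
    · subst h; field_simp [(mem_filter.1 hr).2]
    · simp
  have hσ : ∀ r ∈ s, sval A r = (Uᵀ *ᵥ p r) ⬝ᵥ (Vᵀ *ᵥ rightSingularVector A r) := by
    intro r hr
    rw [mulVec_transpose, ← dotProduct_mulVec, mulVec_mulVec]
    change _ = p r ⬝ᵥ (A *ᵥ rightSingularVector A r)
    simp only [p, smul_dotProduct, smul_eq_mul, mulVec_rightSingularVector_dotProduct, if_true]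
    field_simp [(mem_filter.1 hr).2]
  calc 2 * nucNorm A
      = ∑ r ∈ s, 2 * ((Uᵀ *ᵥ p r) ⬝ᵥ (Vᵀ *ᵥ rightSingularVector A r)) := by
        rw [hnuc, mul_sum]; exact sum_congr rfl fun r hr => by rw [hσ r hr]
    _ ≤ ∑ r ∈ s, ((Uᵀ *ᵥ p r) ⬝ᵥ (Uᵀ *ᵥ p r) +
          (Vᵀ *ᵥ rightSingularVector A r) ⬝ᵥ (Vᵀ *ᵥ rightSingularVector A r)) :=
        sum_le_sum fun r _ => two_mul_dotProduct_le _ _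
    _ ≤ frobSq U + frobSq V := by
        rw [sum_add_distrib]
        exact add_le_add (sum_dotProduct_transpose_mulVec_le s p hp U)
          (sum_dotProduct_transpose_mulVec_le s _ hq V)

lemma exists_mul_transpose_eq_of_rank_le {M N H : ℕ} (S : Matrix (Fin M) (Fin N) ℝ)
    (hS : S.rank ≤ H) :
    ∃ (U : Matrix (Fin M) (Fin H) ℝ) (V : Matrix (Fin N) (Fin H) ℝ),
      U * Vᵀ = S ∧ frobSq U = nucNorm S ∧ frobSq V = nucNorm S := by
  set u := fun r => (√(sval S r))⁻¹ • (S *ᵥ rightSingularVector S r)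
  set v := fun r => √(sval S r) • rightSingularVector S r
  have hv : ∀ r ≥ S.rank, v r = 0 := fun r hr => by simp [v, sval_eq_zero_of_rank_le S hr]
  have huv (r : ℕ) (i : Fin M) (k : Fin N) :
      u r i * v r k = (S *ᵥ rightSingularVector S r) i * rightSingularVector S r k := by
    by_cases h : sval S r = 0
    · simp [u, v, h, mulVec_rightSingularVector_eq_zero S h]
    · have : 0 < √(sval S r) := Real.sqrt_pos.2 ((sval_nonneg S r).lt_of_ne' h)
      simp only [u, v, Pi.smul_apply, smul_eq_mul]
      field_simp
  have hu_sq (r : ℕ) : u r ⬝ᵥ u r = sval S r := by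
    simp only [u, smul_dotProduct, dotProduct_smul, smul_eq_mul,
      mulVec_rightSingularVector_dotProduct, if_true]
    have ht := Real.sq_sqrt (sval_nonneg S r)
    generalize √(sval S r) = t at ht ⊢
    rw [← ht]
    rcases eq_or_ne t 0 with h | h
    · simp [h]
    · field_simp
  have hv_sq (r : ℕ) : v r ⬝ᵥ v r = sval S r := by
    simp only [v, smul_dotProduct, dotProduct_smul, smul_eq_mul]
    by_cases hr : r < N
    · rw [rightSingularVector_dotProduct S hr hr, if_pos rfl, mul_one,
        Real.mul_self_sqrt (sval_nonneg S r)]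
    · simp [sval, hr]
  refine ⟨of fun i h => u h i, of fun k h => v h k, ?_, ?_, ?_⟩
  · ext i k
    have hvanish : ∀ r ≥ S.rank, u r i * v r k = 0 := fun r hr => by simp [hv r hr]
    simp only [mul_apply, transpose_apply, of_apply]
    rw [Fin.sum_univ_eq_sum_range (fun r => u r i * v r k), eventually_constant_sum hvanish hS,
      ← eventually_constant_sum hvanish S.rank_le_width]
    simp only [huv, sum_mulVec_rightSingularVector_mul]
  · rw [frobSq_eq_sum_col_dotProduct, ← sum_range_sval_eq_nucNorm S hS, ← Fin.sum_univ_eq_sum_range]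
    exact sum_congr rfl fun h _ => hu_sq h
  · rw [frobSq_eq_sum_col_dotProduct, ← sum_range_sval_eq_nucNorm S hS, ← Fin.sum_univ_eq_sum_range]
    exact sum_congr rfl fun h _ => hv_sq h

section Coercivity

attribute [local instance] frobeniusNormedAddCommGroup frobeniusNormedSpace

lemma frobSq_eq_frobenius_norm_sq {M N : ℕ} (A : Matrix (Fin M) (Fin N) ℝ) :
    frobSq A = ‖A‖ ^ 2 := by
  rw [frobenius_norm_def, ← Real.rpow_natCast, ← Real.rpow_mul (by positivity)]
  norm_num [frobSq]

lemma exists_forall_le_factorization_objective {M N H : ℕ} (X : Matrix (Fin M) (Fin N) ℝ)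
    {lam : ℝ} (hlam : 0 < lam) :
    ∃ (U₀ : Matrix (Fin M) (Fin H) ℝ) (V₀ : Matrix (Fin N) (Fin H) ℝ),
      ∀ (U : Matrix (Fin M) (Fin H) ℝ) (V : Matrix (Fin N) (Fin H) ℝ),
        frobSq (X - U₀ * V₀ᵀ) + lam * (frobSq U₀ + frobSq V₀)
          ≤ frobSq (X - U * Vᵀ) + lam * (frobSq U + frobSq V) := by
  set f := fun p : Matrix (Fin M) (Fin H) ℝ × Matrix (Fin N) (Fin H) ℝ =>
    frobSq (X - p.1 * p.2ᵀ) + lam * (frobSq p.1 + frobSq p.2)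
  have hcont : Continuous f := by
    simp only [f, frobSq_eq_frobenius_norm_sq]
    fun_prop
  have hbound (p) : lam * ‖p‖ ^ 2 ≤ f p := by
    have : ‖p‖ ^ 2 ≤ ‖p.1‖ ^ 2 + ‖p.2‖ ^ 2 := by
      rw [Prod.norm_def]
      rcases le_total ‖p.1‖ ‖p.2‖ with h | h <;> simp [h]
    simp only [f, frobSq_eq_frobenius_norm_sq]
    nlinarith [sq_nonneg ‖X - p.1 * p.2ᵀ‖]
  have hcoercive : Tendsto f (cocompact _) atTop :=
    tendsto_atTop_mono hbound <| ((tendsto_pow_atTop two_ne_zero).comp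
      tendsto_norm_cocompact_atTop).const_mul_atTop hlam
  obtain ⟨p, hp⟩ := hcont.exists_forall_le hcoercive
  exact ⟨p.1, p.2, fun U V => hp (U, V)⟩

end Coercivity

theorem statement3_general {M N : ℕ} (X : Matrix (Fin M) (Fin N) ℝ)
    (lam : ℝ) (hlam : 0 < lam) (H : ℕ) :
    ∃ m : ℝ,
      IsLeast { c : ℝ | ∃ (U : Matrix (Fin M) (Fin H) ℝ) (V : Matrix (Fin N) (Fin H) ℝ),
          c = frobSq (X - U * Vᵀ) + lam * (frobSq U + frobSq V) } m ∧
      IsLeast { c : ℝ | ∃ S : Matrix (Fin M) (Fin N) ℝ, S.rank ≤ H ∧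
          c = frobSq (X - S) + 2 * lam * nucNorm S } m ∧
      ∀ (U : Matrix (Fin M) (Fin H) ℝ) (V : Matrix (Fin N) (Fin H) ℝ),
        frobSq (X - U * Vᵀ) + lam * (frobSq U + frobSq V) = m →
          (U * Vᵀ).rank ≤ H ∧
          frobSq (X - U * Vᵀ) + 2 * lam * nucNorm (U * Vᵀ) = m := by
  obtain ⟨U₀, V₀, hmin⟩ := exists_forall_le_factorization_objective (H := H) X hlam
  set m := frobSq (X - U₀ * V₀ᵀ) + lam * (frobSq U₀ + frobSq V₀)
  have hlower (S : Matrix (Fin M) (Fin N) ℝ) (hS : S.rank ≤ H) :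
      m ≤ frobSq (X - S) + 2 * lam * nucNorm S := by
    obtain ⟨U, V, rfl, hU, hV⟩ := exists_mul_transpose_eq_of_rank_le S hS
    have := hmin U V
    rw [hU, hV] at this
    linarith
  have hopt (U : Matrix (Fin M) (Fin H) ℝ) (V : Matrix (Fin N) (Fin H) ℝ)
      (hUV : frobSq (X - U * Vᵀ) + lam * (frobSq U + frobSq V) = m) :
      (U * Vᵀ).rank ≤ H ∧ frobSq (X - U * Vᵀ) + 2 * lam * nucNorm (U * Vᵀ) = m := by
    have hrank : (U * Vᵀ).rank ≤ H := (rank_mul_le_left U Vᵀ).trans U.rank_le_width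
    refine ⟨hrank, le_antisymm ?_ (hlower _ hrank)⟩
    nlinarith [two_mul_nucNorm_mul_transpose_le U V]
  obtain ⟨hrank₀, hval₀⟩ := hopt U₀ V₀ rfl
  refine ⟨m, ⟨⟨U₀, V₀, rfl⟩, ?_⟩, ⟨⟨U₀ * V₀ᵀ, hrank₀, hval₀.symm⟩, ?_⟩, hopt⟩
  · rintro c ⟨U, V, rfl⟩
    exact hmin U V
  · rintro c ⟨S, hS, rfl⟩
    exact hlower S hS

/-- **Proposition 3.** The L2-penalized factorization objective and the nuclear-norm
penalized rank-constrained objective have the same (attained) minimum value, and any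
minimizing factorization yields a minimizer of the latter objective. -/
theorem statement3 {M N : ℕ} (X : Matrix (Fin M) (Fin N) ℝ)
    (lam : ℝ) (hlam : 0 < lam) (H : ℕ) (hH : 0 < H) :
    ∃ m : ℝ,
      IsLeast { c : ℝ | ∃ (U : Matrix (Fin M) (Fin H) ℝ) (V : Matrix (Fin N) (Fin H) ℝ),
          c = frobSq (X - U * Vᵀ) + lam * (frobSq U + frobSq V) } m ∧
      IsLeast { c : ℝ | ∃ S : Matrix (Fin M) (Fin N) ℝ, S.rank ≤ H ∧
          c = frobSq (X - S) + 2 * lam * nucNorm S } m ∧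
      ∀ (U : Matrix (Fin M) (Fin H) ℝ) (V : Matrix (Fin N) (Fin H) ℝ),
        frobSq (X - U * Vᵀ) + lam * (frobSq U + frobSq V) = m →
          (U * Vᵀ).rank ≤ H ∧
          frobSq (X - U * Vᵀ) + 2 * lam * nucNorm (U * Vᵀ) = m :=
  statement3_general X lam hlam H
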